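/- (Correctness of CHSH-based Entanglement Verification via Chebyshev) Let α ∈ (0, 1/3), δ ∈ (0, 1), and let (Ω, P) carry a mutually independent family X : Fin 2 × Fin 2 → Fin N → Ω → ℝ of random variables each taking values in {−1, 1}, with common mean μ(i,j) in each family. Let S = μ(0,0) + μ(1,0) + μ(0,1) − μ(1,1), S̄ = m(0,0) + m(1,0) + m(0,1) − m(1,1) with m(i,j) = (1/N)∑ₖ X (i,j) k, and θ = 2√2 − 5√2·α. Suppose ρ is a two-qubit density matrix with S = S(ρ) and F = F(ρ). If N ≥ 3/(δ α²), then: (i) if F ≤ 1 − 3α, then P[S̄ ≥ θ] ≤ δ; and (ii) if F ≥ 1 − α, then P[S̄ < θ] ≤ δ. That is, the test 'accept H₀ : F ≥ 1−α iff S̄ ≥ θ' distinguishes H₀ : F ≥ 1−α from H₁ : F ≤ 1−3α with error probability at most δ. -/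

import Mathlib

open Matrix Kronecker Complex ComplexOrder

noncomputable section

/-- Pauli X matrix. -/
def sigX : Matrix (Fin 2) (Fin 2) ℂ := !![0, 1; 1, 0]

/-- Pauli Z matrix. -/
def sigZ : Matrix (Fin 2) (Fin 2) ℂ := !![1, 0; 0, -1]

/-- Bob's observable `B₀ = (σx + σz)/√2`. -/
def Bob0 : Matrix (Fin 2) (Fin 2) ℂ := ((Real.sqrt 2 : ℂ))⁻¹ • (sigX + sigZ)

/-- Bob's observable `B₁ = (σx − σz)/√2`. -/
def Bob1 : Matrix (Fin 2) (Fin 2) ℂ := ((Real.sqrt 2 : ℂ))⁻¹ • (sigX - sigZ)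

/-- The CHSH operator `Ŝ = A₀⊗B₀ + A₁⊗B₀ + A₀⊗B₁ − A₁⊗B₁` with `A₀ = σx`, `A₁ = σz`. -/
def Shat : Matrix (Fin 2 × Fin 2) (Fin 2 × Fin 2) ℂ :=
  sigX ⊗ₖ Bob0 + sigZ ⊗ₖ Bob0 + sigX ⊗ₖ Bob1 - sigZ ⊗ₖ Bob1

/-- Bell state `|Φ⁺⟩ = (|00⟩ + |11⟩)/√2`. -/
def phiPlus : Fin 2 × Fin 2 → ℂ :=
  fun p => if p = (0, 0) ∨ p = (1, 1) then ((Real.sqrt 2 : ℂ))⁻¹ else 0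

/-- Bell state `|Ψ⁻⟩ = (|01⟩ − |10⟩)/√2`. -/
def psiMinus : Fin 2 × Fin 2 → ℂ :=
  fun p => if p = (0, 1) then ((Real.sqrt 2 : ℂ))⁻¹
    else if p = (1, 0) then -((Real.sqrt 2 : ℂ))⁻¹ else 0

/-- CHSH measure `S(ρ) = Tr(ρ Ŝ)` (a real number for Hermitian ρ). -/
def Smeas (ρ : Matrix (Fin 2 × Fin 2) (Fin 2 × Fin 2) ℂ) : ℝ :=
  ((ρ * Shat).trace).re

/-- Entanglement fidelity `F(ρ) = ⟨Φ⁺|ρ|Φ⁺⟩`. -/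
def Fent (ρ : Matrix (Fin 2 × Fin 2) (Fin 2 × Fin 2) ℂ) : ℝ :=
  (star phiPlus ⬝ᵥ ρ *ᵥ phiPlus).re

end

open MeasureTheory ProbabilityTheory Finset

noncomputable section

/-- Empirical mean `m(i,j) = (1/N) ∑ₖ X (i,j) k`. -/
def empMean {Ω : Type*} {N : ℕ} (X : Fin 2 × Fin 2 → Fin N → Ω → ℝ)
    (ij : Fin 2 × Fin 2) (ω : Ω) : ℝ :=
  (1 / N) * ∑ k, X ij k ω

/-- Empirical CHSH estimate `S̄ = m(0,0) + m(1,0) + m(0,1) − m(1,1)`. -/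
def SbarEmp {Ω : Type*} {N : ℕ} (X : Fin 2 × Fin 2 → Fin N → Ω → ℝ) (ω : Ω) : ℝ :=
  empMean X (0, 0) ω + empMean X (1, 0) ω + empMean X (0, 1) ω - empMean X (1, 1) ω

/-- True CHSH value `S = μ(0,0) + μ(1,0) + μ(0,1) − μ(1,1)`. -/
def Strue (μ : Fin 2 × Fin 2 → ℝ) : ℝ := μ (0, 0) + μ (1, 0) + μ (0, 1) - μ (1, 1)

end

/-! In the Bell basis the CHSH operator is `Ŝ = 2√2 (|Φ⁺⟩⟨Φ⁺| − |Ψ⁻⟩⟨Ψ⁻|)`, so for a density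
matrix `2√2 (2F − 1) ≤ S ≤ 2√2 F`. With `θ = 2√2 − 5√2 α`, the hypothesis `F ≤ 1 − 3α` gives
`S ≤ θ − √2 α` and `F ≥ 1 − α` gives `S ≥ θ + √2 α`, so either error forces `|S̄ − S| ≥ √2 α`.
Now `S̄` is an unbiased estimator of `S` and a sum of `4N` independent terms `±X/N`, so
`Var S̄ ≤ 4/N`, and Chebyshev bounds the deviation probability by `2/(N α²) ≤ δ`. -/

lemma Matrix.trace_mul_vecMulVec {n R : Type*} [Fintype n] [CommSemiring R]
    (ρ : Matrix n n R) (v w : n → R) : (ρ * vecMulVec v w).trace = w ⬝ᵥ ρ *ᵥ v := by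
  rw [mul_vecMulVec, trace_vecMulVec, dotProduct_comm]

lemma Matrix.PosSemidef.re_dotProduct_mulVec_nonneg {n : Type*} [Fintype n]
    {ρ : Matrix n n ℂ} (hρ : ρ.PosSemidef) (v : n → ℂ) : 0 ≤ (star v ⬝ᵥ ρ *ᵥ v).re :=
  (Complex.nonneg_iff.1 (hρ.dotProduct_mulVec_nonneg v)).1

section WeightedSum

variable {Ω ι : Type*} [MeasurableSpace Ω] {P : Measure Ω}

lemma memLp_of_abs_le_one [IsFiniteMeasure P] {Z : Ω → ℝ} (hZ : Measurable Z)
    (hbound : ∀ ω, |Z ω| ≤ 1) (p : ENNReal) : MemLp Z p P :=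
  MemLp.of_bound hZ.aestronglyMeasurable 1 (Filter.Eventually.of_forall hbound)

lemma variance_le_one_of_abs_le_one [IsProbabilityMeasure P] {Z : Ω → ℝ} (hZ : Measurable Z)
    (hbound : ∀ ω, |Z ω| ≤ 1) : variance Z P ≤ 1 :=
  (variance_le_sq_of_bounded (a := -1) (b := 1)
    (Filter.Eventually.of_forall fun ω => abs_le.1 (hbound ω)) hZ.aemeasurable).trans_eq
    (by norm_num)

lemma variance_sum_mul_le_sum_sq [IsProbabilityMeasure P] [Fintype ι] {Y : ι → Ω → ℝ}
    (hmeas : ∀ i, Measurable (Y i)) (hindep : iIndepFun Y P) (hbound : ∀ i ω, |Y i ω| ≤ 1)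
    (w : ι → ℝ) : variance (fun ω => ∑ i, w i * Y i ω) P ≤ ∑ i, w i ^ 2 := by
  have hsum : (fun ω => ∑ i, w i * Y i ω) = ∑ i, fun ω => w i * Y i ω :=
    funext fun ω => (Finset.sum_apply ω univ fun i ω => w i * Y i ω).symm
  have hmemLp i : MemLp (fun ω => w i * Y i ω) 2 P :=
    (memLp_of_abs_le_one (hmeas i) (hbound i) 2).const_mul (w i)
  rw [hsum, IndepFun.variance_sum (fun i _ => hmemLp i) fun i _ j _ hij =>
    (hindep.indepFun hij).comp (measurable_const_mul _) (measurable_const_mul _)]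
  gcongr with i
  rw [variance_const_mul]
  exact mul_le_of_le_one_right (sq_nonneg _) (variance_le_one_of_abs_le_one (hmeas i) (hbound i))

end WeightedSum

noncomputable def phiMinus : Fin 2 × Fin 2 → ℂ :=
  fun p => if p = (0, 0) then ((Real.sqrt 2 : ℂ))⁻¹
    else if p = (1, 1) then -((Real.sqrt 2 : ℂ))⁻¹ else 0

noncomputable def psiPlus : Fin 2 × Fin 2 → ℂ :=
  fun p => if p = (0, 1) ∨ p = (1, 0) then ((Real.sqrt 2 : ℂ))⁻¹ else 0

lemma Shat_eq :
    Shat = (2 * Real.sqrt 2 : ℂ) •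
      (vecMulVec phiPlus (star phiPlus) - vecMulVec psiMinus (star psiMinus)) := by
  ext ⟨i, j⟩ ⟨k, l⟩
  fin_cases i <;> fin_cases j <;> fin_cases k <;> fin_cases l <;>
    simp [Shat, sigX, sigZ, Bob0, Bob1, phiPlus, psiMinus, vecMulVec_apply] <;>
    field_simp <;> ring_nf

lemma bell_projectors_sum_eq_one :
    vecMulVec phiPlus (star phiPlus) + vecMulVec psiMinus (star psiMinus) +
      vecMulVec phiMinus (star phiMinus) + vecMulVec psiPlus (star psiPlus) = 1 := by
  have hs2 : (Real.sqrt 2 : ℂ) ^ 2 = 2 := by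
    rw [← Complex.ofReal_pow, Real.sq_sqrt zero_le_two, Complex.ofReal_ofNat]
  ext ⟨i, j⟩ ⟨k, l⟩
  fin_cases i <;> fin_cases j <;> fin_cases k <;> fin_cases l <;>
    simp [phiPlus, psiMinus, phiMinus, psiPlus, vecMulVec_apply, one_apply] <;>
    field_simp <;> norm_num [hs2]

lemma Smeas_eq (ρ : Matrix (Fin 2 × Fin 2) (Fin 2 × Fin 2) ℂ) :
    Smeas ρ = 2 * Real.sqrt 2 * (Fent ρ - (star psiMinus ⬝ᵥ ρ *ᵥ psiMinus).re) := by
  rw [Smeas, Shat_eq, Matrix.mul_smul, Matrix.mul_sub, trace_smul, trace_sub,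
    trace_mul_vecMulVec, trace_mul_vecMulVec, smul_eq_mul, ← Complex.ofReal_ofNat,
    ← Complex.ofReal_mul, Complex.re_ofReal_mul, Complex.sub_re, Fent]

lemma Fent_add_re_psiMinus_le {ρ : Matrix (Fin 2 × Fin 2) (Fin 2 × Fin 2) ℂ}
    (hρ : ρ.PosSemidef) (htr : ρ.trace = 1) :
    Fent ρ + (star psiMinus ⬝ᵥ ρ *ᵥ psiMinus).re ≤ 1 := by
  have hsum := congrArg (fun M => (ρ * M).trace.re) bell_projectors_sum_eq_one
  simp only [Matrix.mul_add, trace_add, trace_mul_vecMulVec, Matrix.mul_one, htr,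
    Complex.add_re, Complex.one_re] at hsum
  rw [Fent]
  linarith [hρ.re_dotProduct_mulVec_nonneg phiMinus, hρ.re_dotProduct_mulVec_nonneg psiPlus]

lemma Smeas_le_two_sqrt_two_mul_Fent {ρ : Matrix (Fin 2 × Fin 2) (Fin 2 × Fin 2) ℂ}
    (hρ : ρ.PosSemidef) : Smeas ρ ≤ 2 * Real.sqrt 2 * Fent ρ := by
  rw [Smeas_eq]
  have := hρ.re_dotProduct_mulVec_nonneg psiMinus
  have : 0 ≤ Real.sqrt 2 := Real.sqrt_nonneg 2
  nlinarith

lemma two_sqrt_two_mul_two_mul_Fent_sub_one_le_Smeas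
    {ρ : Matrix (Fin 2 × Fin 2) (Fin 2 × Fin 2) ℂ} (hρ : ρ.PosSemidef) (htr : ρ.trace = 1) :
    2 * Real.sqrt 2 * (2 * Fent ρ - 1) ≤ Smeas ρ := by
  rw [Smeas_eq]
  have := Fent_add_re_psiMinus_le hρ htr
  have : 0 ≤ Real.sqrt 2 := Real.sqrt_nonneg 2
  nlinarith

def chshSign (ij : Fin 2 × Fin 2) : ℝ := if ij = (1, 1) then -1 else 1

lemma chshSign_sq (ij : Fin 2 × Fin 2) : chshSign ij ^ 2 = 1 := by
  unfold chshSign; split_ifs <;> norm_num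

lemma Strue_eq_sum (μ : Fin 2 × Fin 2 → ℝ) : Strue μ = ∑ ij, chshSign ij * μ ij := by
  simp only [Strue, chshSign, Fintype.sum_prod_type, Fin.sum_univ_two, Prod.mk.injEq,
    zero_ne_one, and_false, and_true, if_false, if_true]
  ring

lemma SbarEmp_eq_sum {Ω : Type*} {N : ℕ} (X : Fin 2 × Fin 2 → Fin N → Ω → ℝ) (ω : Ω) :
    SbarEmp X ω = ∑ p : (Fin 2 × Fin 2) × Fin N, chshSign p.1 / N * X p.1 p.2 ω := by
  simp only [SbarEmp, empMean, Fintype.sum_prod_type, ← mul_sum, Fin.sum_univ_two, chshSign,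
    Prod.mk.injEq, zero_ne_one, and_false, and_true, if_false, if_true]
  ring

section Estimator

variable {Ω : Type*} [MeasurableSpace Ω] {P : Measure Ω} {N : ℕ}
  {X : Fin 2 × Fin 2 → Fin N → Ω → ℝ}

lemma integral_SbarEmp (hN : N ≠ 0) (hint : ∀ ij k, Integrable (X ij k) P)
    {μ : Fin 2 × Fin 2 → ℝ} (hmean : ∀ ij k, ∫ ω, X ij k ω ∂P = μ ij) :
    ∫ ω, SbarEmp X ω ∂P = Strue μ := by
  simp_rw [SbarEmp_eq_sum]
  rw [integral_finsetSum _ fun p _ => (hint p.1 p.2).const_mul _]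
  simp only [integral_const_mul, hmean, Fintype.sum_prod_type, sum_const, card_univ,
    Fintype.card_fin, nsmul_eq_mul, Strue_eq_sum]
  congr 1 with ij
  field_simp

lemma variance_SbarEmp_le [IsProbabilityMeasure P] (hmeas : ∀ ij k, Measurable (X ij k))
    (hindep : iIndepFun (fun p : (Fin 2 × Fin 2) × Fin N => X p.1 p.2) P)
    (hbound : ∀ ij k ω, |X ij k ω| ≤ 1) : variance (SbarEmp X) P ≤ 4 / N := by
  have hvar := variance_sum_mul_le_sum_sq (fun p => hmeas p.1 p.2) hindep
    (fun p => hbound p.1 p.2) fun p : (Fin 2 × Fin 2) × Fin N => chshSign p.1 / N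
  simp only [← SbarEmp_eq_sum, div_pow, chshSign_sq, sum_const, card_univ, Fintype.card_prod,
    Fintype.card_fin, nsmul_eq_mul] at hvar
  refine hvar.trans_eq ?_
  rcases N.eq_zero_or_pos with rfl | hN
  · simp
  · field_simp
    push_cast
    ring

lemma measureReal_le_abs_SbarEmp_sub_le [IsProbabilityMeasure P] (hN : N ≠ 0)
    (hmeas : ∀ ij k, Measurable (X ij k))
    (hindep : iIndepFun (fun p : (Fin 2 × Fin 2) × Fin N => X p.1 p.2) P)
    (hbound : ∀ ij k ω, |X ij k ω| ≤ 1)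
    {μ : Fin 2 × Fin 2 → ℝ} (hmean : ∀ ij k, ∫ ω, X ij k ω ∂P = μ ij) {ε : ℝ} (hε : 0 < ε) :
    P.real {ω | ε ≤ |SbarEmp X ω - Strue μ|} ≤ 4 / (N * ε ^ 2) := by
  have hmemLp : ∀ ij k, MemLp (X ij k) 2 P := fun ij k =>
    memLp_of_abs_le_one (hmeas ij k) (hbound ij k) 2
  have hSbar : MemLp (SbarEmp X) 2 P := by
    rw [funext (SbarEmp_eq_sum X)]
    exact memLp_finsetSum _ fun (p : (Fin 2 × Fin 2) × Fin N) _ => (hmemLp p.1 p.2).const_mul _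
  have hint : ∀ ij k, Integrable (X ij k) P := fun ij k => (hmemLp ij k).integrable one_le_two
  have hcheb := meas_ge_le_variance_div_sq hSbar hε
  rw [integral_SbarEmp hN hint hmean] at hcheb
  calc P.real {ω | ε ≤ |SbarEmp X ω - Strue μ|} ≤ variance (SbarEmp X) P / ε ^ 2 :=
        ENNReal.toReal_le_of_le_ofReal (div_nonneg (variance_nonneg _ _) (sq_nonneg ε)) hcheb
    _ ≤ 4 / N / ε ^ 2 := by gcongr; exact variance_SbarEmp_le hmeas hindep hbound
    _ = 4 / (N * ε ^ 2) := div_div _ _ _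

end Estimator

theorem entanglement_verification_correct_general {Ω : Type*} [MeasurableSpace Ω]
    (P : MeasureTheory.Measure Ω) [MeasureTheory.IsProbabilityMeasure P]
    (N : ℕ)
    (X : Fin 2 × Fin 2 → Fin N → Ω → ℝ)
    (hmeas : ∀ ij k, Measurable (X ij k))
    (hindep : ProbabilityTheory.iIndepFun
      (fun (p : (Fin 2 × Fin 2) × Fin N) => X p.1 p.2) P)
    (hval : ∀ ij k ω, X ij k ω = 1 ∨ X ij k ω = -1)
    (μ : Fin 2 × Fin 2 → ℝ)
    (hmean : ∀ ij k, ∫ ω, X ij k ω ∂P = μ ij)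
    (α δ : ℝ) (hα : 0 < α) (hδ : 0 < δ)
    (ρ : Matrix (Fin 2 × Fin 2) (Fin 2 × Fin 2) ℂ)
    (hρ : ρ.PosSemidef) (htr : ρ.trace = 1)
    (hSρ : Strue μ = Smeas ρ)
    (hNbig : (N : ℝ) ≥ 3 / (δ * α ^ 2)) :
    (Fent ρ ≤ 1 - 3 * α →
      (P {ω | SbarEmp X ω ≥ 2 * Real.sqrt 2 - 5 * Real.sqrt 2 * α}).toReal ≤ δ) ∧
    (Fent ρ ≥ 1 - α →
      (P {ω | SbarEmp X ω < 2 * Real.sqrt 2 - 5 * Real.sqrt 2 * α}).toReal ≤ δ) := by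
  have hN : (0 : ℝ) < N := (by positivity : (0 : ℝ) < 3 / (δ * α ^ 2)).trans_le hNbig
  have hbound : ∀ ij k ω, |X ij k ω| ≤ 1 := fun ij k ω => by
    rcases hval ij k ω with h | h <;> simp [h]
  have hdev := measureReal_le_abs_SbarEmp_sub_le (Nat.cast_pos.1 hN).ne' hmeas hindep hbound
    hmean (by positivity : 0 < Real.sqrt 2 * α)
  have hδ_bound : 4 / (N * (Real.sqrt 2 * α) ^ 2) ≤ δ := by
    rw [mul_pow, Real.sq_sqrt zero_le_two, div_le_iff₀ (by positivity)]
    rw [ge_iff_le, div_le_iff₀ (by positivity)] at hNbig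
    nlinarith
  have hS_le := hSρ ▸ Smeas_le_two_sqrt_two_mul_Fent hρ
  have hS_ge := hSρ ▸ two_sqrt_two_mul_two_mul_Fent_sub_one_le_Smeas hρ htr
  have hs : 0 < Real.sqrt 2 := Real.sqrt_pos.2 two_pos
  refine ⟨fun hF => ?_, fun hF => ?_⟩
  · have hS : Strue μ ≤ 2 * Real.sqrt 2 - 6 * Real.sqrt 2 * α := by nlinarith
    refine (measureReal_mono fun ω (hω : _ ≤ SbarEmp X ω) => ?_).trans (hdev.trans hδ_bound)
    rw [Set.mem_ofPred_eq]
    linarith [le_abs_self (SbarEmp X ω - Strue μ)]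
  · have hS : 2 * Real.sqrt 2 - 4 * Real.sqrt 2 * α ≤ Strue μ := by nlinarith
    refine (measureReal_mono fun ω (hω : SbarEmp X ω < _) => ?_).trans (hdev.trans hδ_bound)
    rw [Set.mem_ofPred_eq]
    linarith [neg_abs_le (SbarEmp X ω - Strue μ)]

/-- Correctness of CHSH-based Entanglement Verification via Chebyshev: with threshold
`θ = 2√2 − 5√2·α` and sample size `N ≥ 3/(δ α²)`, the test `accept H₀ iff S̄ ≥ θ`
distinguishes `H₀ : F(ρ) ≥ 1 − α` from `H₁ : F(ρ) ≤ 1 − 3α` with error probability at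
most δ. -/
theorem entanglement_verification_correct {Ω : Type*} [MeasurableSpace Ω]
    (P : MeasureTheory.Measure Ω) [MeasureTheory.IsProbabilityMeasure P]
    (N : ℕ) (hN : 0 < N)
    (X : Fin 2 × Fin 2 → Fin N → Ω → ℝ)
    (hmeas : ∀ ij k, Measurable (X ij k))
    (hindep : ProbabilityTheory.iIndepFun
      (fun (p : (Fin 2 × Fin 2) × Fin N) => X p.1 p.2) P)
    (hval : ∀ ij k ω, X ij k ω = 1 ∨ X ij k ω = -1)
    (μ : Fin 2 × Fin 2 → ℝ)
    (hmean : ∀ ij k, ∫ ω, X ij k ω ∂P = μ ij)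
    (α δ : ℝ) (hα : 0 < α) (hα' : α < 1 / 3) (hδ : 0 < δ) (hδ' : δ < 1)
    (ρ : Matrix (Fin 2 × Fin 2) (Fin 2 × Fin 2) ℂ)
    (hρ : ρ.PosSemidef) (htr : ρ.trace = 1)
    (hSρ : Strue μ = Smeas ρ)
    (hNbig : (N : ℝ) ≥ 3 / (δ * α ^ 2)) :
    (Fent ρ ≤ 1 - 3 * α →
      (P {ω | SbarEmp X ω ≥ 2 * Real.sqrt 2 - 5 * Real.sqrt 2 * α}).toReal ≤ δ) ∧
    (Fent ρ ≥ 1 - α →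
      (P {ω | SbarEmp X ω < 2 * Real.sqrt 2 - 5 * Real.sqrt 2 * α}).toReal ≤ δ) :=
  entanglement_verification_correct_general P N X hmeas hindep hval μ hmean α δ hα hδ ρ hρ htr hSρ
    hNbig
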